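/- arXiv:2508.08913 — 5 statements merged into one kernel-verified Lean document; each statement's English description precedes it below -/
import Mathlib

section
/- The admissible set of ideal compressible MHD equals its geometric quasi-linearization (GQL) representation: G = G*. That is, a state U = (ρ, m, B, E) ∈ ℝ⁸ satisfies ρ > 0 and E − |m|²/(2ρ) − |B|²/2 > 0 if and only if U·n₁ > 0 and, for every pair of auxiliary vectors u*, B* ∈ ℝ³, U·n* + |B*|²/2 > 0. -/
noncomputable section
namespace IdealMHD

/-- A conservative MHD state `U = (ρ, m, B, E)` identified with a vector in `ℝ⁸`. -/
abbrev State := Fin 8 → ℝ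

/-- density ρ -/
def dens (U : State) : ℝ := U 0

/-- momentum components `m i`, `i = 0,1,2` -/
def mom (U : State) (i : Fin 3) : ℝ := U ⟨i.1 + 1, by omega⟩

/-- magnetic field components `B i`, `i = 0,1,2` -/
def mag (U : State) (i : Fin 3) : ℝ := U ⟨i.1 + 4, by omega⟩

/-- total energy E -/
def toten (U : State) : ℝ := U 7

/-- squared Euclidean norm of a 3-vector -/
def sq3 (v : Fin 3 → ℝ) : ℝ := ∑ i, v i ^ 2

/-- Euclidean dot product of 3-vectors -/
def dot3 (v w : Fin 3 → ℝ) : ℝ := ∑ i, v i * w i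

/-- Euclidean norm of a 3-vector -/
def norm3 (v : Fin 3 → ℝ) : ℝ := Real.sqrt (sq3 v)

/-- internal energy `𝓔(U) = E − |m|²/(2ρ) − |B|²/2` -/
def intE (U : State) : ℝ := toten U - sq3 (mom U) / (2 * dens U) - sq3 (mag U) / 2

/-- admissible set `G = { U : ρ > 0, 𝓔(U) > 0 }` -/
def Adm : Set State := {U | 0 < dens U ∧ 0 < intE U}

/-- Euclidean dot product in `ℝ⁸` -/
def dot8 (U V : State) : ℝ := ∑ i, U i * V i

/-- the vector `n₁ = (1,0,0,0,0,0,0,0)` -/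
def n1 : State := ![1, 0, 0, 0, 0, 0, 0, 0]

/-- the GQL vector `n* = (|u*|²/2, −u*, −B*, 1)` -/
def nstar (us Bs : Fin 3 → ℝ) : State :=
  ![sq3 us / 2, -us 0, -us 1, -us 2, -Bs 0, -Bs 1, -Bs 2, 1]

/-- the ℓ-th directional ideal MHD flux `F_ℓ(U)` (with ideal-gas EOS of index γ) -/
def flux (γ : ℝ) (ℓ : Fin 3) (U : State) : State :=
  let u : Fin 3 → ℝ := fun i => mom U i / dens U
  let ptot : ℝ := (γ - 1) * intE U + sq3 (mag U) / 2
  ![mom U ℓ,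
    mom U ℓ * u 0 - mag U ℓ * mag U 0 + (if ℓ = 0 then ptot else 0),
    mom U ℓ * u 1 - mag U ℓ * mag U 1 + (if ℓ = 1 then ptot else 0),
    mom U ℓ * u 2 - mag U ℓ * mag U 2 + (if ℓ = 2 then ptot else 0),
    u ℓ * mag U 0 - mag U ℓ * u 0,
    u ℓ * mag U 1 - mag U ℓ * u 1,
    u ℓ * mag U 2 - mag U ℓ * u 2,
    u ℓ * (toten U + ptot) - mag U ℓ * dot3 u (mag U)]

/-- `C_s = p/(ρ√(2e))` with `p = (γ−1)ρe`, `e = 𝓔(U)/ρ` -/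
def soundC (γ : ℝ) (U : State) : ℝ :=
  (γ - 1) * intE U / (dens U * Real.sqrt (2 * (intE U / dens U)))

/-- the discriminant `(C_s² + |B|²/ρ)² − 4 C_s² B_ℓ²/ρ` -/
def discrim (γ : ℝ) (ℓ : Fin 3) (U : State) : ℝ :=
  (soundC γ U ^ 2 + sq3 (mag U) / dens U) ^ 2 -
    4 * soundC γ U ^ 2 * mag U ℓ ^ 2 / dens U

/-- the fast speed bound `C_ℓ` -/
def fastC (γ : ℝ) (ℓ : Fin 3) (U : State) : ℝ :=
  (1 / Real.sqrt 2) *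
    Real.sqrt (soundC γ U ^ 2 + sq3 (mag U) / dens U + Real.sqrt (discrim γ ℓ U))

/-- the viscosity coefficient `α_ℓ(U, Ũ)` -/
def alphaSpeed (γ : ℝ) (ℓ : Fin 3) (U Ut : State) : ℝ :=
  max
    (max (|mom U ℓ / dens U| + fastC γ ℓ U) (|mom Ut ℓ / dens Ut| + fastC γ ℓ Ut))
    ((Real.sqrt (dens U) * (mom U ℓ / dens U) +
        Real.sqrt (dens Ut) * (mom Ut ℓ / dens Ut)) /
        (Real.sqrt (dens U) + Real.sqrt (dens Ut)) +
      max (fastC γ ℓ U) (fastC γ ℓ Ut)) +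
  norm3 (fun i => mag U i - mag Ut i) / (Real.sqrt (dens U) + Real.sqrt (dens Ut))

/-- the GQL set `G*` -/
def AdmStar : Set State :=
  {U | 0 < dot8 U n1 ∧ ∀ us Bs : Fin 3 → ℝ, 0 < dot8 U (nstar us Bs) + sq3 Bs / 2}

lemma mom0 (U : State) : mom U 0 = U 1 := rfl
lemma mom1 (U : State) : mom U 1 = U 2 := rfl
lemma mom2 (U : State) : mom U 2 = U 3 := rfl
lemma mag0 (U : State) : mag U 0 = U 4 := rfl
lemma mag1 (U : State) : mag U 1 = U 5 := rfl
lemma mag2 (U : State) : mag U 2 = U 6 := rfl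

lemma nstar0 (us Bs : Fin 3 → ℝ) : nstar us Bs 0 = sq3 us / 2 := rfl
lemma nstar1 (us Bs : Fin 3 → ℝ) : nstar us Bs 1 = -us 0 := rfl
lemma nstar2 (us Bs : Fin 3 → ℝ) : nstar us Bs 2 = -us 1 := rfl
lemma nstar3 (us Bs : Fin 3 → ℝ) : nstar us Bs 3 = -us 2 := rfl
lemma nstar4 (us Bs : Fin 3 → ℝ) : nstar us Bs 4 = -Bs 0 := rfl
lemma nstar5 (us Bs : Fin 3 → ℝ) : nstar us Bs 5 = -Bs 1 := rfl
lemma nstar6 (us Bs : Fin 3 → ℝ) : nstar us Bs 6 = -Bs 2 := rfl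
lemma nstar7 (us Bs : Fin 3 → ℝ) : nstar us Bs 7 = 1 := rfl

lemma dot8_n1 (U : State) : dot8 U n1 = U 0 := by
  have h0 : n1 0 = 1 := rfl
  have h1 : n1 1 = 0 := rfl
  have h2 : n1 2 = 0 := rfl
  have h3 : n1 3 = 0 := rfl
  have h4 : n1 4 = 0 := rfl
  have h5 : n1 5 = 0 := rfl
  have h6 : n1 6 = 0 := rfl
  have h7 : n1 7 = 0 := rfl
  simp [dot8, Fin.sum_univ_eight, h0, h1, h2, h3, h4, h5, h6, h7]

lemma key (U : State) (hρ : dens U ≠ 0) (us Bs : Fin 3 → ℝ) :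
    dot8 U (nstar us Bs) + sq3 Bs / 2 =
      intE U + dens U * sq3 (fun i => us i - mom U i / dens U) / 2
        + sq3 (fun i => Bs i - mag U i) / 2 := by
  simp only [dot8, Fin.sum_univ_eight, nstar0, nstar1, nstar2, nstar3, nstar4, nstar5,
    nstar6, nstar7, intE, sq3, Fin.sum_univ_three, toten, dens, mom0, mom1, mom2,
    mag0, mag1, mag2]
  have h : U 0 ≠ 0 := hρ
  field_simp
  ring

/-- the admissible set equals its GQL representation, `G = G*`. -/
theorem adm_eq_admStar : Adm = AdmStar := by
  ext U
  constructor
  · rintro ⟨hρ, hE⟩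
    refine ⟨by rwa [dot8_n1], fun us Bs => ?_⟩
    rw [key U hρ.ne' us Bs]
    have h1 : 0 ≤ sq3 (fun i => us i - mom U i / dens U) :=
      Finset.sum_nonneg fun i _ => sq_nonneg _
    have h2 : 0 ≤ sq3 (fun i => Bs i - mag U i) :=
      Finset.sum_nonneg fun i _ => sq_nonneg _
    have := mul_nonneg hρ.le h1
    linarith
  · rintro ⟨h1, h2⟩
    have hρ : 0 < dens U := by rwa [dot8_n1] at h1
    refine ⟨hρ, ?_⟩
    have := h2 (fun i => mom U i / dens U) (mag U)
    rw [key U hρ.ne'] at this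
    simpa [sq3] using this

end IdealMHD
end
end

section
/- For every state U = (ρ, m, B, E) ∈ ℝ⁸ with ρ > 0, the infimum over all u*, B* ∈ ℝ³ of U·n* + |B*|²/2 equals the internal energy 𝓔(U), and this infimum is attained at u* = m/ρ and B* = B. -/
noncomputable section
namespace IdealMHD

lemma gql_key (U : State) (hρ : 0 < dens U) (us Bs : Fin 3 → ℝ) :
    dot8 U (nstar us Bs) + sq3 Bs / 2 =
      intE U + (dens U / 2) * sq3 (fun i => us i - mom U i / dens U) +
        sq3 (fun i => Bs i - mag U i) / 2 := by
  have h : dens U ≠ 0 := ne_of_gt hρ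
  have n0 : nstar us Bs 0 = sq3 us / 2 := rfl
  have n1 : nstar us Bs 1 = -us 0 := rfl
  have n2 : nstar us Bs 2 = -us 1 := rfl
  have n3 : nstar us Bs 3 = -us 2 := rfl
  have n4 : nstar us Bs 4 = -Bs 0 := rfl
  have n5 : nstar us Bs 5 = -Bs 1 := rfl
  have n6 : nstar us Bs 6 = -Bs 2 := rfl
  have n7 : nstar us Bs 7 = 1 := rfl
  have m0 : mom U 0 = U 1 := rfl
  have m1 : mom U 1 = U 2 := rfl
  have m2 : mom U 2 = U 3 := rfl
  have b0 : mag U 0 = U 4 := rfl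
  have b1 : mag U 1 = U 5 := rfl
  have b2 : mag U 2 = U 6 := rfl
  simp only [dot8, sq3, intE, toten, dens, Fin.sum_univ_eight, Fin.sum_univ_three,
    n0, n1, n2, n3, n4, n5, n6, n7, m0, m1, m2, b0, b1, b2]
  field_simp
  linear_combination (2 * (us 0 * U 1 + us 1 * U 2 + us 2 * U 3) -
    (U 1 ^ 2 + U 2 ^ 2 + U 3 ^ 2) * (U 0)⁻¹) * mul_inv_cancel₀ (show U 0 ≠ 0 from h)

/-- the infimum over `(u*, B*)` of `U·n* + |B*|²/2` equals `𝓔(U)` and is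
attained at `u* = m/ρ`, `B* = B`. -/
theorem gql_infimum (U : State) (hρ : 0 < dens U) :
    IsLeast {x : ℝ | ∃ us Bs : Fin 3 → ℝ, x = dot8 U (nstar us Bs) + sq3 Bs / 2} (intE U) ∧
      dot8 U (nstar (fun i => mom U i / dens U) (mag U)) + sq3 (mag U) / 2 = intE U := by
  have hatt : dot8 U (nstar (fun i => mom U i / dens U) (mag U)) + sq3 (mag U) / 2
      = intE U := by
    rw [gql_key U hρ]
    simp [sq3]
  refine ⟨⟨⟨fun i => mom U i / dens U, mag U, hatt.symm⟩, ?_⟩, hatt⟩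
  rintro x ⟨us, Bs, rfl⟩
  rw [gql_key U hρ]
  have h1 : 0 ≤ sq3 (fun i => us i - mom U i / dens U) :=
    Finset.sum_nonneg fun i _ => sq_nonneg _
  have h2 : 0 ≤ sq3 (fun i => Bs i - mag U i) :=
    Finset.sum_nonneg fun i _ => sq_nonneg _
  nlinarith

end IdealMHD
end
end

section
/- The admissible set G of ideal compressible MHD is a convex subset of ℝ⁸: if U, V ∈ G and λ ∈ [0,1], then λU + (1−λ)V ∈ G. -/
noncomputable section
namespace IdealMHD

/-- convexity of the perspective function `(a,p) ↦ a²/(2p)` -/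
lemma frac_convex (la mu a b p q : ℝ) (hp : 0 < p) (hq : 0 < q)
    (hla : 0 ≤ la) (hmu : 0 ≤ mu) (hpos : 0 < la * p + mu * q) :
    (la * a + mu * b) ^ 2 / (2 * (la * p + mu * q)) ≤
      la * (a ^ 2 / (2 * p)) + mu * (b ^ 2 / (2 * q)) := by
  rw [div_le_iff₀ (by positivity)]
  have h1 : la * (a ^ 2 / (2 * p)) = la * a ^ 2 / (2 * p) := by ring
  have h2 : mu * (b ^ 2 / (2 * q)) = mu * b ^ 2 / (2 * q) := by ring
  rw [h1, h2, div_add_div _ _ (by positivity) (by positivity)]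
  rw [div_mul_eq_mul_div, le_div_iff₀ (by positivity)]
  nlinarith [mul_nonneg (mul_nonneg hla hmu) (sq_nonneg (a * q - b * p)),
    mul_pos hp hq, sq_nonneg (a * q - b * p)]

lemma sq_convex (la mu x y : ℝ) (hla : 0 ≤ la) (hmu : 0 ≤ mu) (hsum : la + mu = 1) :
    (la * x + mu * y) ^ 2 ≤ la * x ^ 2 + mu * y ^ 2 := by
  nlinarith [mul_nonneg (mul_nonneg hla hmu) (sq_nonneg (x - y))]

/-- the admissible set `G` is convex. -/
theorem adm_convex (U V : State) (hU : U ∈ Adm) (hV : V ∈ Adm)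
    (lam : ℝ) (h0 : 0 ≤ lam) (h1 : lam ≤ 1) :
    lam • U + (1 - lam) • V ∈ Adm := by
  obtain ⟨hU1, hU2⟩ := hU
  obtain ⟨hV1, hV2⟩ := hV
  set mu := 1 - lam with hmu_def
  have hmu : 0 ≤ mu := by simp [hmu_def]; linarith
  have hsum : lam + mu = 1 := by ring
  have hdens : 0 < lam * dens U + mu * dens V := by
    rcases eq_or_lt_of_le h0 with h | h
    · simp [← h, hmu_def]; linarith [hV1]
    · have : 0 < lam * dens U := mul_pos h hU1
      nlinarith [mul_nonneg hmu hV1.le]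
  have hW : ∀ i, (lam • U + mu • V) i = lam * U i + mu * V i := by
    intro i; simp [Pi.add_apply, Pi.smul_apply, smul_eq_mul]
  constructor
  · show 0 < dens (lam • U + mu • V)
    simpa [dens, hW] using hdens
  · show 0 < intE (lam • U + mu • V)
    have hdW : dens (lam • U + mu • V) = lam * dens U + mu * dens V := by
      simp [dens, hW]
    have hmom : ∀ i, mom (lam • U + mu • V) i = lam * mom U i + mu * mom V i := by
      intro i; simp [mom, hW]
    have hmag : ∀ i, mag (lam • U + mu • V) i = lam * mag U i + mu * mag V i := by
      intro i; simp [mag, hW]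
    have htot : toten (lam • U + mu • V) = lam * toten U + mu * toten V := by
      simp [toten, hW]
    have hm : sq3 (mom (lam • U + mu • V)) / (2 * dens (lam • U + mu • V)) ≤
        lam * (sq3 (mom U) / (2 * dens U)) + mu * (sq3 (mom V) / (2 * dens V)) := by
      rw [hdW]
      have expand : sq3 (mom (lam • U + mu • V)) =
          ∑ i, (lam * mom U i + mu * mom V i) ^ 2 := by
        simp [sq3, hmom]
      rw [expand]
      have step : ∀ i : Fin 3, (lam * mom U i + mu * mom V i) ^ 2 /
          (2 * (lam * dens U + mu * dens V)) ≤
          lam * (mom U i ^ 2 / (2 * dens U)) + mu * (mom V i ^ 2 / (2 * dens V)) :=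
        fun i => frac_convex lam mu _ _ _ _ hU1 hV1 h0 hmu hdens
      calc (∑ i, (lam * mom U i + mu * mom V i) ^ 2) /
            (2 * (lam * dens U + mu * dens V))
          = ∑ i, (lam * mom U i + mu * mom V i) ^ 2 /
            (2 * (lam * dens U + mu * dens V)) := by
            rw [Finset.sum_div]
        _ ≤ ∑ i, (lam * (mom U i ^ 2 / (2 * dens U)) +
              mu * (mom V i ^ 2 / (2 * dens V))) := Finset.sum_le_sum fun i _ => step i
        _ = lam * (sq3 (mom U) / (2 * dens U)) + mu * (sq3 (mom V) / (2 * dens V)) := by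
            simp [sq3, Finset.sum_add_distrib, ← Finset.mul_sum, Finset.sum_div]
    have hb : sq3 (mag (lam • U + mu • V)) / 2 ≤
        lam * (sq3 (mag U) / 2) + mu * (sq3 (mag V) / 2) := by
      have expand : sq3 (mag (lam • U + mu • V)) =
          ∑ i, (lam * mag U i + mu * mag V i) ^ 2 := by
        simp [sq3, hmag]
      rw [expand]
      have step : ∀ i : Fin 3, (lam * mag U i + mu * mag V i) ^ 2 ≤
          lam * mag U i ^ 2 + mu * mag V i ^ 2 :=
        fun i => sq_convex lam mu _ _ h0 hmu hsum
      calc (∑ i, (lam * mag U i + mu * mag V i) ^ 2) / 2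
          ≤ (∑ i, (lam * mag U i ^ 2 + mu * mag V i ^ 2)) / 2 := by
            gcongr with i
            exact step i
        _ = lam * (sq3 (mag U) / 2) + mu * (sq3 (mag V) / 2) := by
            simp [sq3, Finset.sum_add_distrib, ← Finset.mul_sum]
            ring
    have hkey : lam * intE U + mu * intE V ≤ intE (lam • U + mu • V) := by
      unfold intE
      rw [htot]
      have : lam * (toten U - sq3 (mom U) / (2 * dens U) - sq3 (mag U) / 2) +
          mu * (toten V - sq3 (mom V) / (2 * dens V) - sq3 (mag V) / 2) =
          lam * toten U + mu * toten V -
          (lam * (sq3 (mom U) / (2 * dens U)) + mu * (sq3 (mom V) / (2 * dens V))) -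
          (lam * (sq3 (mag U) / 2) + mu * (sq3 (mag V) / 2)) := by ring
      rw [this]
      linarith [hm, hb]
    have hpos : 0 < lam * intE U + mu * intE V := by
      rcases eq_or_lt_of_le h0 with h | h
      · simp [← h, hmu_def]; linarith [hV2]
      · nlinarith [mul_pos h hU2, mul_nonneg hmu hV2.le]
    linarith


end IdealMHD
end
end

section
/- First GQL flux inequality: for every constant γ > 1, every direction ℓ ∈ {1,2,3}, and all admissible states U, Ũ ∈ G, one has the strict inequality −(F_ℓ(U) − F_ℓ(Ũ))·n₁ > −α_ℓ(U,Ũ) (U + Ũ)·n₁; equivalently, −(m_ℓ − m̃_ℓ) > −α_ℓ(U,Ũ)(ρ + ρ̃). -/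
noncomputable section
namespace IdealMHD

lemma fastC_pos (γ : ℝ) (hγ : 1 < γ) (ℓ : Fin 3) (U : State) (hU : U ∈ Adm) :
    0 < fastC γ ℓ U := by
  obtain ⟨hρ, hE⟩ := hU
  have hs : 0 < soundC γ U := by
    unfold soundC
    apply div_pos (by nlinarith)
    apply mul_pos hρ
    apply Real.sqrt_pos.mpr
    positivity
  have hsq : 0 ≤ sq3 (mag U) := Finset.sum_nonneg fun i _ => sq_nonneg _
  have hd : 0 ≤ Real.sqrt (discrim γ ℓ U) := Real.sqrt_nonneg _
  have hdiv : 0 ≤ sq3 (mag U) / dens U := by positivity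
  unfold fastC
  apply mul_pos (by positivity)
  apply Real.sqrt_pos.mpr
  nlinarith

/-- first GQL flux inequality
`−(F_ℓ(U) − F_ℓ(Ũ))·n₁ > −α_ℓ(U,Ũ)(U + Ũ)·n₁`. -/
theorem gql_flux_ineq_n1 (γ : ℝ) (hγ : 1 < γ) (ℓ : Fin 3) (U Ut : State)
    (hU : U ∈ Adm) (hUt : Ut ∈ Adm) :
    -alphaSpeed γ ℓ U Ut * dot8 (U + Ut) n1 < -dot8 (flux γ ℓ U - flux γ ℓ Ut) n1 := by
  have hρ := hU.1
  have hρt := hUt.1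
  have e0 : n1 0 = 1 := rfl
  have e1 : n1 1 = 0 := rfl
  have e2 : n1 2 = 0 := rfl
  have e3 : n1 3 = 0 := rfl
  have e4 : n1 4 = 0 := rfl
  have e5 : n1 5 = 0 := rfl
  have e6 : n1 6 = 0 := rfl
  have e7 : n1 7 = 0 := rfl
  have h1 : dot8 (U + Ut) n1 = dens U + dens Ut := by
    simp only [dot8, Fin.sum_univ_eight, Pi.add_apply, e0, e1, e2, e3, e4, e5, e6, e7]
    simp [dens]
  have h2 : dot8 (flux γ ℓ U - flux γ ℓ Ut) n1 = mom U ℓ - mom Ut ℓ := by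
    have f0 : flux γ ℓ U 0 = mom U ℓ := rfl
    have f0t : flux γ ℓ Ut 0 = mom Ut ℓ := rfl
    simp only [dot8, Fin.sum_univ_eight, Pi.sub_apply, e0, e1, e2, e3, e4, e5, e6, e7]
    simp [f0, f0t]
  rw [h1, h2]
  have hC := fastC_pos γ hγ ℓ U hU
  have hCt := fastC_pos γ hγ ℓ Ut hUt
  have hnorm : 0 ≤ norm3 (fun i => mag U i - mag Ut i) /
      (Real.sqrt (dens U) + Real.sqrt (dens Ut)) := by
    apply div_nonneg (Real.sqrt_nonneg _)
    have := Real.sqrt_nonneg (dens U)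
    have := Real.sqrt_pos.mpr hρt
    linarith
  have ha1 : |mom U ℓ / dens U| + fastC γ ℓ U ≤ alphaSpeed γ ℓ U Ut := by
    unfold alphaSpeed
    have := le_max_left (|mom U ℓ / dens U| + fastC γ ℓ U)
      (|mom Ut ℓ / dens Ut| + fastC γ ℓ Ut)
    have := le_max_left
      (max (|mom U ℓ / dens U| + fastC γ ℓ U) (|mom Ut ℓ / dens Ut| + fastC γ ℓ Ut))
      ((Real.sqrt (dens U) * (mom U ℓ / dens U) +
        Real.sqrt (dens Ut) * (mom Ut ℓ / dens Ut)) /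
        (Real.sqrt (dens U) + Real.sqrt (dens Ut)) +
      max (fastC γ ℓ U) (fastC γ ℓ Ut))
    linarith
  have ha2 : |mom Ut ℓ / dens Ut| + fastC γ ℓ Ut ≤ alphaSpeed γ ℓ U Ut := by
    unfold alphaSpeed
    have := le_max_right (|mom U ℓ / dens U| + fastC γ ℓ U)
      (|mom Ut ℓ / dens Ut| + fastC γ ℓ Ut)
    have := le_max_left
      (max (|mom U ℓ / dens U| + fastC γ ℓ U) (|mom Ut ℓ / dens Ut| + fastC γ ℓ Ut))
      ((Real.sqrt (dens U) * (mom U ℓ / dens U) +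
        Real.sqrt (dens Ut) * (mom Ut ℓ / dens Ut)) /
        (Real.sqrt (dens U) + Real.sqrt (dens Ut)) +
      max (fastC γ ℓ U) (fastC γ ℓ Ut))
    linarith
  have habs : |mom U ℓ| = dens U * |mom U ℓ / dens U| := by
    rw [abs_div, abs_of_pos hρ]
    field_simp
  have habst : |mom Ut ℓ| = dens Ut * |mom Ut ℓ / dens Ut| := by
    rw [abs_div, abs_of_pos hρt]
    field_simp
  have hm1 : mom U ℓ < alphaSpeed γ ℓ U Ut * dens U := by
    nlinarith [le_abs_self (mom U ℓ), abs_nonneg (mom U ℓ / dens U)]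
  have hm2 : -(mom Ut ℓ) < alphaSpeed γ ℓ U Ut * dens Ut := by
    nlinarith [neg_abs_le (mom Ut ℓ), abs_nonneg (mom Ut ℓ / dens Ut)]
  nlinarith

end IdealMHD
end
end

section
/- Correctness of the internal-energy limiting step: let Ū ∈ ℝ⁸ have positive density and 𝓔(Ū) ≥ ε for some ε > 0, and let Ǔ^(1), …, Ǔ^(Q) ∈ ℝ⁸ each have positive density component. Set m := min_q 𝓔(Ǔ^(q)) and suppose m < ε. Then θ := (𝓔(Ū) − ε)/(𝓔(Ū) − m) satisfies θ ∈ [0, 1), and for every q the limited state Û^(q) := (1 − θ) Ū + θ Ǔ^(q) has positive density and satisfies 𝓔(Û^(q)) ≥ ε; in particular Û^(q) belongs to the admissible set G. -/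
noncomputable section
namespace IdealMHD

/-!
The internal energy `𝓔(U) = E − |m|²/(2ρ) − |B|²/2` is concave on the half-space `ρ > 0`:
`E` is linear, `|B|²/2` is convex, and `|m|²/(2ρ)` is the perspective of the convex function
`|m|²/2`. The limiter weight `θ` is chosen so that the convex combination
`(1 − θ) 𝓔(Ū) + θ m` equals `ε` exactly; since `m ≤ 𝓔(Ǔ^(q))`, concavity gives
`𝓔(Û^(q)) ≥ (1 − θ) 𝓔(Ū) + θ 𝓔(Ǔ^(q)) ≥ ε`.
-/

lemma sq_add_div_add_le {a b ρ σ : ℝ} (x y : ℝ) (ha : 0 ≤ a) (hb : 0 ≤ b)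
    (hρ : 0 < ρ) (hσ : 0 < σ) :
    (a * x + b * y) ^ 2 / (a * ρ + b * σ) ≤ a * (x ^ 2 / ρ) + b * (y ^ 2 / σ) := by
  rcases (add_nonneg (mul_nonneg ha hρ.le) (mul_nonneg hb hσ.le)).eq_or_lt with h0 | hpos
  · rw [← h0, div_zero]
    positivity
  rw [div_le_iff₀ hpos]
  have key : 2 * x * y ≤ σ / ρ * x ^ 2 + ρ / σ * y ^ 2 := by
    have : σ / ρ * x ^ 2 + ρ / σ * y ^ 2 - 2 * x * y = (σ * x - ρ * y) ^ 2 / (ρ * σ) := by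
      field_simp
      ring
    linarith [div_nonneg (sq_nonneg (σ * x - ρ * y)) (mul_pos hρ hσ).le]
  have expand : (a * (x ^ 2 / ρ) + b * (y ^ 2 / σ)) * (a * ρ + b * σ) =
      a ^ 2 * x ^ 2 + b ^ 2 * y ^ 2 + a * b * (σ / ρ * x ^ 2 + ρ / σ * y ^ 2) := by
    field_simp
    ring
  rw [expand]
  nlinarith [mul_nonneg ha hb]

lemma sum_sq_add_div_add_le {ι : Type*} (s : Finset ι) {a b ρ σ : ℝ} (f g : ι → ℝ)
    (ha : 0 ≤ a) (hb : 0 ≤ b) (hρ : 0 < ρ) (hσ : 0 < σ) :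
    (∑ i ∈ s, (a * f i + b * g i) ^ 2) / (a * ρ + b * σ) ≤
      a * ((∑ i ∈ s, f i ^ 2) / ρ) + b * ((∑ i ∈ s, g i ^ 2) / σ) := by
  simp only [Finset.sum_div, Finset.mul_sum, ← Finset.sum_add_distrib]
  exact Finset.sum_le_sum fun i _ => sq_add_div_add_le (f i) (g i) ha hb hρ hσ

lemma dens_add_smul (a b : ℝ) (U V : State) :
    dens (a • U + b • V) = a * dens U + b * dens V := rfl

lemma mom_add_smul (a b : ℝ) (U V : State) (i : Fin 3) :
    mom (a • U + b • V) i = a * mom U i + b * mom V i := rfl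

lemma mag_add_smul (a b : ℝ) (U V : State) (i : Fin 3) :
    mag (a • U + b • V) i = a * mag U i + b * mag V i := rfl

lemma toten_add_smul (a b : ℝ) (U V : State) :
    toten (a • U + b • V) = a * toten U + b * toten V := rfl

lemma convex_dens_pos : Convex ℝ {U : State | 0 < dens U} :=
  convex_halfSpace_gt ⟨fun _ _ => rfl, fun _ _ => rfl⟩ 0

theorem concaveOn_intE : ConcaveOn ℝ {U : State | 0 < dens U} intE := by
  refine ⟨convex_dens_pos, fun U hU V hV a b ha hb hab => ?_⟩
  have hkin : sq3 (mom (a • U + b • V)) / (2 * dens (a • U + b • V)) ≤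
      a * (sq3 (mom U) / (2 * dens U)) + b * (sq3 (mom V) / (2 * dens V)) := by
    simp only [sq3, mom_add_smul, dens_add_smul]
    have h := sum_sq_add_div_add_le Finset.univ (mom U) (mom V) ha hb
      (mul_pos two_pos (show 0 < dens U from hU)) (mul_pos two_pos (show 0 < dens V from hV))
    rwa [show a * (2 * dens U) + b * (2 * dens V) = 2 * (a * dens U + b * dens V) by ring] at h
  have hmag : sq3 (mag (a • U + b • V)) / 2 ≤ a * (sq3 (mag U) / 2) + b * (sq3 (mag V) / 2) := by
    have h := sum_sq_add_div_add_le Finset.univ (mag U) (mag V) ha hb one_pos one_pos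
    simp only [mul_one, hab, div_one] at h
    have hdiv := div_le_div_of_nonneg_right h (zero_le_two (α := ℝ))
    simp only [sq3, mag_add_smul]
    linarith
  simp only [intE, toten_add_smul, smul_eq_mul] at hkin ⊢
  linarith

lemma limiter_weight {E ε m θ : ℝ} (hmε : m < ε) (hεE : ε ≤ E) (hθ : θ = (E - ε) / (E - m)) :
    (0 ≤ θ ∧ θ < 1) ∧ (1 - θ) * E + θ * m = ε := by
  have hgap : 0 < E - m := by linarith
  subst hθ
  refine ⟨⟨div_nonneg (by linarith) hgap.le, (div_lt_one hgap).2 (by linarith)⟩, ?_⟩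
  field_simp
  ring

/-- correctness of the internal-energy limiting step. -/
theorem energy_limiter (Q : ℕ) (hQ : 0 < Q) (Ub : State) (hρ : 0 < dens Ub)
    (ε : ℝ) (hε : 0 < ε) (hEb : ε ≤ intE Ub)
    (Uc : Fin Q → State) (hUc : ∀ q, 0 < dens (Uc q))
    (m : ℝ)
    (hm : m = Finset.univ.inf' ⟨⟨0, hQ⟩, Finset.mem_univ _⟩ (fun q => intE (Uc q)))
    (hmε : m < ε)
    (θ : ℝ) (hθ : θ = (intE Ub - ε) / (intE Ub - m)) :
    (0 ≤ θ ∧ θ < 1) ∧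
      ∀ q : Fin Q,
        0 < dens ((1 - θ) • Ub + θ • Uc q) ∧
        ε ≤ intE ((1 - θ) • Ub + θ • Uc q) ∧
        ((1 - θ) • Ub + θ • Uc q) ∈ Adm := by
  obtain ⟨⟨hθ0, hθ1⟩, hθε⟩ := limiter_weight hmε hEb hθ
  refine ⟨⟨hθ0, hθ1⟩, fun q => ?_⟩
  have hmq : m ≤ intE (Uc q) := hm ▸ Finset.inf'_le _ (Finset.mem_univ q)
  have hw : 0 ≤ 1 - θ := sub_nonneg.2 hθ1.le
  have hd : 0 < dens ((1 - θ) • Ub + θ • Uc q) :=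
    concaveOn_intE.1 hρ (hUc q) hw hθ0 (sub_add_cancel 1 θ)
  have hE : ε ≤ intE ((1 - θ) • Ub + θ • Uc q) :=
    calc ε = (1 - θ) * intE Ub + θ * m := hθε.symm
      _ ≤ (1 - θ) • intE Ub + θ • intE (Uc q) := by
        simp only [smul_eq_mul]; gcongr
      _ ≤ intE ((1 - θ) • Ub + θ • Uc q) :=
        concaveOn_intE.2 hρ (hUc q) hw hθ0 (sub_add_cancel 1 θ)
  exact ⟨hd, hE, hd, hε.trans_le hE⟩

end IdealMHD
end
end
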